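/- In ℤQ for Q a finite tree quiver, given a section Σ containing a vertex M and a finite set S of vertices of ℤQ with M ∉ S such that no two elements of S are related by τ^{±1} (i.e. τs, τ⁻¹s ∉ S for all s ∈ S), there exists a section Σ' of ℤQ containing M with Σ' ∩ S = ∅. -/

import Mathlib

/-!
The sections of `ℤQ` are the graphs `{(f q, q)}` of the height functions `f : Q₀ → ℤ`, those with
`f a ∈ {f b, f b + 1}` for every arrow `a → b`. As `Q` is a tree, such an `f` can be built by
propagating the level of `M` outwards from its vertex: a new vertex keeps the level of its
neighbour unless the resulting point lies in `S`, and then takes the other admissible level,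
which is not in `S` since `S` contains no two `τ`-neighbours. A section can only exist when `Q` has no loops and
no 2-cycles; the tree `Q` is then graded, and so `ℤQ` has no oriented cycles.
-/

namespace Stmt15

variable {Q0 : Type*}

def ZArrow (QArrow : Q0 → Q0 → Prop) : ℤ × Q0 → ℤ × Q0 → Prop :=
  fun x y => (y.1 = x.1 ∧ QArrow x.2 y.2) ∨ (y.1 = x.1 + 1 ∧ QArrow y.2 x.2)

def tauZQ (Q0 : Type*) : Equiv.Perm (ℤ × Q0) :=
  ⟨fun x => (x.1 - 1, x.2), fun x => (x.1 + 1, x.2),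
    fun x => by simp, fun x => by simp⟩

def IsPathOn {V : Type*} (Arrow : V → V → Prop) (p : ℕ → V) (t : ℕ) : Prop :=
  ∀ i < t, Arrow (p i) (p (i + 1))

def ConnectedOn {V : Type*} (Arrow : V → V → Prop) (S : Set V) : Prop :=
  ∀ x ∈ S, ∀ y ∈ S, Relation.ReflTransGen
    (fun a b => a ∈ S ∧ b ∈ S ∧ (Arrow a b ∨ Arrow b a)) x y

def IsSection {V : Type*} (Arrow : V → V → Prop) (τ : Equiv.Perm V) (S : Set V) : Prop :=
  ConnectedOn Arrow S ∧
  (∀ (p : ℕ → V) (t : ℕ), 0 < t → IsPathOn Arrow p t → (∀ i ≤ t, p i ∈ S) → p 0 ≠ p t) ∧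
  (∀ x : V, ∃! n : ℤ, (τ ^ n) x ∈ S) ∧
  (∀ (p : ℕ → V) (t : ℕ), IsPathOn Arrow p t → p 0 ∈ S → p t ∈ S → ∀ i ≤ t, p i ∈ S)

def underlyingGraph (QArrow : Q0 → Q0 → Prop) : SimpleGraph Q0 where
  Adj a b := a ≠ b ∧ (QArrow a b ∨ QArrow b a)
  symm := ⟨fun _ _ h => ⟨h.1.symm, h.2.symm⟩⟩
  loopless := ⟨fun _ h => h.1 rfl⟩

section Paths

variable {V β : Type*} [Preorder β] {Arrow : V → V → Prop} {p : ℕ → V} {t : ℕ}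

lemma IsPathOn.monotoneOn_comp {D : V → β} (hD : ∀ x y, Arrow x y → D x ≤ D y)
    (hp : IsPathOn Arrow p t) : MonotoneOn (D ∘ p) (Set.Iic t) :=
  monotoneOn_of_le_succ Set.ordConnected_Iic fun i _ _ hi =>
    hD _ _ (hp i (Order.succ_le_iff.mp hi))

lemma IsPathOn.strictMonoOn_comp {D : V → β} (hD : ∀ x y, Arrow x y → D x < D y)
    (hp : IsPathOn Arrow p t) : StrictMonoOn (D ∘ p) (Set.Iic t) :=
  strictMonoOn_Iic_of_lt_succ fun i hi => hD _ _ (hp i hi)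

end Paths

lemma tauZQ_zpow_apply (n : ℤ) (x : ℤ × Q0) : (tauZQ Q0 ^ n) x = (x.1 - n, x.2) := by
  induction n using Int.induction_on generalizing x with
  | zero => simp
  | succ k ih =>
    rw [zpow_add_one, Equiv.Perm.mul_apply, ih]
    simp only [tauZQ, Equiv.coe_fn_mk]
    ring_nf
  | pred k ih =>
    rw [zpow_sub_one, Equiv.Perm.mul_apply, ih]
    simp only [Equiv.Perm.inv_def, tauZQ, Equiv.coe_fn_symm_mk]
    ring_nf

section Sections

variable {QArrow : Q0 → Q0 → Prop} {T : Set (ℤ × Q0)}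

lemma IsSection.eq_of_mem (hT : IsSection (ZArrow QArrow) (tauZQ Q0) T) {q : Q0} {n k : ℤ}
    (hn : (n, q) ∈ T) (hk : (k, q) ∈ T) : n = k := by
  have hmem : ∀ {j : ℤ}, (j, q) ∈ T → (tauZQ Q0 ^ (-j)) (0, q) ∈ T := fun h => by
    rw [tauZQ_zpow_apply]; simpa using h
  simpa using (hT.2.2.1 (0, q)).unique (hmem hn) (hmem hk)

lemma IsSection.exists_mem (hT : IsSection (ZArrow QArrow) (tauZQ Q0) T) (q : Q0) :
    ∃ n : ℤ, (n, q) ∈ T := by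
  obtain ⟨n, hn⟩ := (hT.2.2.1 (0, q)).exists
  rw [tauZQ_zpow_apply] at hn
  exact ⟨_, hn⟩

def zigzag (a b : Q0) (n : ℤ) (i : ℕ) : ℤ × Q0 :=
  (n + (i / 2 : ℕ), if Even i then a else b)

lemma zigzag_two_mul (a b : Q0) (n : ℤ) (j : ℕ) : zigzag a b n (2 * j) = (n + j, a) := by
  simp [zigzag]

lemma zigzag_two_mul_add_one (a b : Q0) (n : ℤ) (j : ℕ) :
    zigzag a b n (2 * j + 1) = (n + j, b) := by
  simp [zigzag, Nat.add_div_of_dvd_right]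

lemma zArrow_zigzag {a b : Q0} (hab : QArrow a b) (n : ℤ) (i : ℕ) :
    ZArrow QArrow (zigzag a b n i) (zigzag a b n (i + 1)) := by
  obtain ⟨j, rfl | rfl⟩ := Nat.even_or_odd' i
  · rw [zigzag_two_mul, zigzag_two_mul_add_one]
    exact Or.inl ⟨rfl, hab⟩
  · rw [zigzag_two_mul_add_one, show 2 * j + 1 + 1 = 2 * (j + 1) by ring, zigzag_two_mul]
    exact Or.inr ⟨by push_cast; ring, hab⟩

lemma isPathOn_zigzag {a b : Q0} (hab : QArrow a b) (n : ℤ) (t : ℕ) :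
    IsPathOn (ZArrow QArrow) (zigzag a b n) t :=
  fun i _ => zArrow_zigzag hab n i

/-- Convexity along the zigzag `(n, a) → (n, b) → (n + 1, a) → (n + 1, b) → ⋯`. -/
lemma IsSection.level_eq_or_eq_add_one (hT : IsSection (ZArrow QArrow) (tauZQ Q0) T)
    {a b : Q0} (hab : QArrow a b) {n k : ℤ} (ha : (n, a) ∈ T) (hb : (k, b) ∈ T) :
    k = n ∨ n = k + 1 := by
  rcases le_or_gt n k with hnk | hkn
  · obtain ⟨j, rfl⟩ := Int.le.dest hnk
    have hnb : (n, b) ∈ T := by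
      simpa [zigzag] using hT.2.2.2 (zigzag a b n) (2 * j + 1) (isPathOn_zigzag hab n _)
        (by simpa [zigzag] using ha) (by rwa [zigzag_two_mul_add_one]) 1 (by omega)
    exact Or.inl (hT.eq_of_mem hb hnb)
  · obtain ⟨j, rfl⟩ := Int.le.dest hkn
    have hend : zigzag a b k (2 * j + 1 + 1) = (k + 1 + j, a) := by
      rw [show 2 * j + 1 + 1 = 2 * (j + 1) by ring, zigzag_two_mul]
      push_cast
      ring_nf
    have hka : (k + 1, a) ∈ T := by
      simpa [zigzag] using hT.2.2.2 (fun i => zigzag a b k (i + 1)) (2 * j + 1)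
        (fun i _ => zArrow_zigzag hab k (i + 1)) (by simpa [zigzag] using hb)
        (by rwa [hend]) 1 (by omega)
    exact Or.inr (hT.eq_of_mem ha hka)

lemma IsSection.not_loop (hT : IsSection (ZArrow QArrow) (tauZQ Q0) T) (a : Q0) :
    ¬ QArrow a a := by
  intro haa
  obtain ⟨n, hn⟩ := hT.exists_mem a
  exact hT.2.1 (fun _ => (n, a)) 1 one_pos (fun _ _ => Or.inl ⟨rfl, haa⟩) (fun _ _ => hn) rfl

lemma IsSection.not_antiparallel (hT : IsSection (ZArrow QArrow) (tauZQ Q0) T) {a b : Q0}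
    (hab : QArrow a b) : ¬ QArrow b a := by
  intro hba
  obtain ⟨n, hn⟩ := hT.exists_mem a
  obtain ⟨k, hk⟩ := hT.exists_mem b
  obtain rfl : k = n := by
    have := hT.level_eq_or_eq_add_one hab hn hk
    have := hT.level_eq_or_eq_add_one hba hk hn
    omega
  exact hT.2.1 (fun i => if Even i then (k, a) else (k, b)) 2 two_pos
    (fun i hi => by interval_cases i <;> simp [ZArrow, hab, hba])
    (fun i _ => by split_ifs <;> assumption) (by simp)

end Sections

section HeightFunctions

variable {QArrow : Q0 → Q0 → Prop}

/-- An arrow `a → b` of `Q` then lifts to the graph of `f`, either as `(f a, a) → (f b, b)` or as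
the mesh arrow `(f b, b) → (f b + 1, a)`. -/
def IsHeightFunction (QArrow : Q0 → Q0 → Prop) (f : Q0 → ℤ) : Prop :=
  ∀ a b, QArrow a b → f a = f b ∨ f a = f b + 1

def heightSection (f : Q0 → ℤ) : Set (ℤ × Q0) := {x | x.1 = f x.2}

lemma mem_heightSection {f : Q0 → ℤ} {x : ℤ × Q0} : x ∈ heightSection f ↔ x.1 = f x.2 :=
  Iff.rfl

lemma grading_lt_of_zArrow {φ : Q0 → ℤ} (hφ : ∀ a b, QArrow a b → φ b = φ a + 1)
    {x y : ℤ × Q0} (hxy : ZArrow QArrow x y) : 2 * x.1 + φ x.2 < 2 * y.1 + φ y.2 := by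
  rcases hxy with ⟨hy, hab⟩ | ⟨hy, hba⟩
  · have := hφ _ _ hab; omega
  · have := hφ _ _ hba; omega

lemma IsHeightFunction.sub_le_sub_of_zArrow {f : Q0 → ℤ} (hf : IsHeightFunction QArrow f)
    {x y : ℤ × Q0} (hxy : ZArrow QArrow x y) : x.1 - f x.2 ≤ y.1 - f y.2 := by
  rcases hxy with ⟨hy, hab⟩ | ⟨hy, hba⟩
  · rcases hf _ _ hab with h | h <;> omega
  · rcases hf _ _ hba with h | h <;> omega

lemma IsHeightFunction.connectedOn_heightSection {f : Q0 → ℤ} (hf : IsHeightFunction QArrow f)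
    (hQ : (underlyingGraph QArrow).Preconnected) :
    ConnectedOn (ZArrow QArrow) (heightSection f) := by
  rintro ⟨n, a⟩ (rfl : n = f a) ⟨k, b⟩ (rfl : k = f b)
  refine Relation.ReflTransGen.lift (fun c => (f c, c)) (fun c d hcd => ?_) a b
    ((SimpleGraph.reachable_iff_reflTransGen a b).mp (hQ a b))
  refine ⟨rfl, rfl, ?_⟩
  rcases hcd.2 with hcd | hdc
  · rcases hf _ _ hcd with h | h
    · exact Or.inl (Or.inl ⟨h.symm, hcd⟩)
    · exact Or.inr (Or.inr ⟨h, hcd⟩)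
  · rcases hf _ _ hdc with h | h
    · exact Or.inr (Or.inl ⟨h.symm, hdc⟩)
    · exact Or.inl (Or.inr ⟨h, hdc⟩)

/-- A grading of `Q` makes `(n, q) ↦ 2 n + φ q` a grading of `ℤQ`, so `ℤQ` has no oriented
cycles; the convexity of `heightSection f` comes from `x.1 - f x.2` growing along paths. -/
lemma IsHeightFunction.isSection_heightSection {f : Q0 → ℤ} (hf : IsHeightFunction QArrow f)
    (hQ : (underlyingGraph QArrow).Preconnected) {φ : Q0 → ℤ}
    (hφ : ∀ a b, QArrow a b → φ b = φ a + 1) :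
    IsSection (ZArrow QArrow) (tauZQ Q0) (heightSection f) := by
  refine ⟨hf.connectedOn_heightSection hQ, ?_, fun x => ?_, ?_⟩
  · intro p t ht hp _ hcycle
    have := (hp.strictMonoOn_comp (fun _ _ h => grading_lt_of_zArrow hφ h))
      (Set.mem_Iic.2 (Nat.zero_le t)) (Set.mem_Iic.2 le_rfl) ht
    simp only [Function.comp_apply, hcycle] at this
    exact this.false
  · refine ⟨x.1 - f x.2, ?_, fun n hn => ?_⟩
    · simp [mem_heightSection, tauZQ_zpow_apply]
    · simp only [mem_heightSection, tauZQ_zpow_apply] at hn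
      omega
  · intro p t hp h0 ht i hi
    have hmono := hp.monotoneOn_comp (fun _ _ h => hf.sub_le_sub_of_zArrow h)
    have h0i := hmono (Set.mem_Iic.2 (Nat.zero_le t)) (Set.mem_Iic.2 hi) (Nat.zero_le i)
    have hit := hmono (Set.mem_Iic.2 hi) (Set.mem_Iic.2 le_rfl) hi
    rw [mem_heightSection] at h0 ht ⊢
    simp only [Function.comp_apply] at h0i hit
    omega

end HeightFunctions

section TreeFold

variable {V α : Type*} {G : SimpleGraph V}

def walkFold (step : V → V → α → α) (init : α) : {u v : V} → G.Walk u v → α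
  | _, _, .nil => init
  | u, _, .cons (v := w) _ p => step u w (walkFold step init p)

lemma walkFold_satisfies {P : V → α → Prop} {step : V → V → α → α} {init : α} {v r : V}
    (hinit : P r init) (hstep : ∀ a b x, P a (step a b x)) (p : G.Walk v r) :
    P v (walkFold step init p) := by
  cases p with
  | nil => exact hinit
  | cons _ _ => exact hstep _ _ _

variable (hG : G.IsTree) (r : V)

noncomputable def treePath (v : V) : G.Walk v r :=
  (hG.existsUnique_path v r).exists.choose

lemma treePath_isPath (v : V) : (treePath hG r v).IsPath :=
  (hG.existsUnique_path v r).exists.choose_spec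

lemma eq_treePath {v : V} {p : G.Walk v r} (hp : p.IsPath) : p = treePath hG r v :=
  (hG.existsUnique_path v r).unique hp (treePath_isPath hG r v)

/-- The function on a tree obtained by propagating `init` from the root `r` outwards, the value
at a vertex `a` being `step a b x` when `b` is the neighbour of `a` towards `r` and carries `x`. -/
noncomputable def treeFold (step : V → V → α → α) (init : α) (v : V) : α :=
  walkFold step init (treePath hG r v)

variable {r} {step : V → V → α → α} {init : α}

lemma treeFold_root : treeFold hG r step init r = init := by
  rw [treeFold, ← eq_treePath hG r SimpleGraph.Walk.IsPath.nil]
  rfl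

lemma treeFold_eq_of_isPath_cons {u w : V} (h : G.Adj u w)
    (hp : (SimpleGraph.Walk.cons h (treePath hG r w)).IsPath) :
    treeFold hG r step init u = step u w (treeFold hG r step init w) := by
  rw [treeFold, ← eq_treePath hG r hp]
  rfl

lemma treeFold_adj {c d : V} (h : G.Adj c d) :
    treeFold hG r step init c = step c d (treeFold hG r step init d) ∨
      treeFold hG r step init d = step d c (treeFold hG r step init c) := by
  by_cases hc : c ∈ (treePath hG r d).support
  · have hd : d ∉ (treePath hG r c).support := by
      simpa using hG.isAcyclic.ne_mem_support_of_support_of_adj_of_isPath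
        (treePath_isPath hG r d).reverse (treePath_isPath hG r c).reverse h.symm (by simpa using hc)
    exact Or.inr (treeFold_eq_of_isPath_cons hG h.symm ((treePath_isPath hG r c).cons hd))
  · exact Or.inl (treeFold_eq_of_isPath_cons hG h ((treePath_isPath hG r d).cons hc))

end TreeFold

section TreeQuivers

variable {QArrow : Q0 → Q0 → Prop}

lemma treeFold_arrow {α : Type*} (hTree : (underlyingGraph QArrow).IsTree)
    (hloop : ∀ a, ¬ QArrow a a) (r : Q0) (step : Q0 → Q0 → α → α) (init : α) {a b : Q0}
    (hab : QArrow a b) :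
    treeFold hTree r step init a = step a b (treeFold hTree r step init b) ∨
      treeFold hTree r step init b = step b a (treeFold hTree r step init a) :=
  treeFold_adj hTree ⟨fun h => hloop a (h ▸ hab), Or.inl hab⟩

lemma exists_grading (hTree : (underlyingGraph QArrow).IsTree) (hloop : ∀ a, ¬ QArrow a a)
    (hanti : ∀ a b, QArrow a b → ¬ QArrow b a) :
    ∃ φ : Q0 → ℤ, ∀ a b, QArrow a b → φ b = φ a + 1 := by
  classical
  obtain ⟨r⟩ := hTree.connected.nonempty
  let step : Q0 → Q0 → ℤ → ℤ := fun a b x => if QArrow a b then x - 1 else x + 1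
  refine ⟨treeFold hTree r step 0, fun a b hab => ?_⟩
  rcases treeFold_arrow hTree hloop r step 0 hab with h | h
  · rw [h]
    simp only [step, if_pos hab]
    ring
  · rw [h]
    simp only [step, if_neg (hanti a b hab)]

lemma exists_heightFunction_avoiding (hTree : (underlyingGraph QArrow).IsTree)
    (hloop : ∀ a, ¬ QArrow a a) (hanti : ∀ a b, QArrow a b → ¬ QArrow b a) {S : Set (ℤ × Q0)}
    (hτS : ∀ s ∈ S, (tauZQ Q0) s ∉ S ∧ (tauZQ Q0).symm s ∉ S) {m : ℤ} {r : Q0}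
    (hmr : (m, r) ∉ S) :
    ∃ f : Q0 → ℤ, IsHeightFunction QArrow f ∧ f r = m ∧ ∀ q, (f q, q) ∉ S := by
  classical
  let step : Q0 → Q0 → ℤ → ℤ := fun a b x =>
    if (x, a) ∈ S then (if QArrow a b then x + 1 else x - 1) else x
  refine ⟨treeFold hTree r step m, fun a b hab => ?_, treeFold_root hTree,
    fun q => walkFold_satisfies (P := fun q x => (x, q) ∉ S) hmr (fun a b x => ?_) _⟩
  · rcases treeFold_arrow hTree hloop r step m hab with h | h
    · rw [h]
      simp only [step, if_pos hab]
      split_ifs <;> simp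
    · rw [h]
      simp only [step, if_neg (hanti a b hab)]
      split_ifs <;> omega
  · simp only [step]
    split_ifs with hxa
    · exact (hτS _ hxa).2
    · exact (hτS _ hxa).1
    · exact hxa

end TreeQuivers

theorem section_avoiding_finite_set_general
    (QArrow : Q0 → Q0 → Prop)
    -- Q is a tree quiver
    (hTree : (underlyingGraph QArrow).IsTree)
    -- a section Sigma containing a vertex M
    (Sig : Set (ℤ × Q0)) (hSig : IsSection (ZArrow QArrow) (tauZQ Q0) Sig)
    (M : ℤ × Q0)
    -- a finite set S avoiding M with no two elements related by τ^{±1}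
    (S : Set (ℤ × Q0)) (hMS : M ∉ S)
    (hτS : ∀ s ∈ S, (tauZQ Q0) s ∉ S ∧ (tauZQ Q0).symm s ∉ S) :
    -- conclusion: a section Sigma' containing M and disjoint from S
    ∃ T : Set (ℤ × Q0), IsSection (ZArrow QArrow) (tauZQ Q0) T ∧ M ∈ T ∧ T ∩ S = ∅ := by
  obtain ⟨m, r⟩ := M
  have hloop := hSig.not_loop
  have hanti : ∀ a b, QArrow a b → ¬ QArrow b a := fun _ _ => hSig.not_antiparallel
  obtain ⟨φ, hφ⟩ := exists_grading hTree hloop hanti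
  obtain ⟨f, hf, hfr, hfS⟩ := exists_heightFunction_avoiding hTree hloop hanti hτS hMS
  refine ⟨heightSection f, hf.isSection_heightSection hTree.connected.preconnected hφ,
    hfr.symm, Set.eq_empty_of_forall_notMem ?_⟩
  rintro ⟨n, q⟩ ⟨rfl : n = f q, hS⟩
  exact hfS q hS

theorem section_avoiding_finite_set
    [Fintype Q0] (QArrow : Q0 → Q0 → Prop)
    -- Q is a tree quiver
    (hTree : (underlyingGraph QArrow).IsTree)
    -- a section Sigma containing a vertex M
    (Sig : Set (ℤ × Q0)) (hSig : IsSection (ZArrow QArrow) (tauZQ Q0) Sig)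
    (M : ℤ × Q0) (hM : M ∈ Sig)
    -- a finite set S avoiding M with no two elements related by τ^{±1}
    (S : Set (ℤ × Q0)) (hSfin : S.Finite) (hMS : M ∉ S)
    (hτS : ∀ s ∈ S, (tauZQ Q0) s ∉ S ∧ (tauZQ Q0).symm s ∉ S) :
    -- conclusion: a section Sigma' containing M and disjoint from S
    ∃ T : Set (ℤ × Q0), IsSection (ZArrow QArrow) (tauZQ Q0) T ∧ M ∈ T ∧ T ∩ S = ∅ :=
  section_avoiding_finite_set_general QArrow hTree Sig hSig M S hMS hτS

end Stmt15
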